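/- If a finite ranked poset P admits a partition into symmetric chains, then the width of P equals the number of elements of height ⌊ht(P)/2⌋, and the partition is a minimum chain partition. -/

import Mathlib

/-- The height of `x`: the supremum of the lengths (`#C - 1`) of finite chains
with greatest element `x`. -/
noncomputable def heightOf {P : Type*} [PartialOrder P] (x : P) : ℕ :=
  sSup {n | ∃ C : Finset P, IsChain (· ≤ ·) (C : Set P) ∧ x ∈ C ∧
    (∀ y ∈ C, y ≤ x) ∧ C.card - 1 = n}

/-- The height of a poset: the supremum of the heights of its elements. -/
noncomputable def heightPoset (P : Type*) [PartialOrder P] : ℕ :=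
  sSup {n | ∃ x : P, heightOf x = n}

/-- A finite poset is ranked if every chain with greatest element `x` is
contained in a chain of length `ht x` with greatest element `x`. -/
def IsRanked (P : Type*) [PartialOrder P] : Prop :=
  ∀ (x : P) (C : Finset P), IsChain (· ≤ ·) (C : Set P) → x ∈ C → (∀ y ∈ C, y ≤ x) →
    ∃ D : Finset P, C ⊆ D ∧ IsChain (· ≤ ·) (D : Set P) ∧ x ∈ D ∧
      (∀ y ∈ D, y ≤ x) ∧ D.card - 1 = heightOf x

/-- A saturated chain: any two elements of `C` with nothing of `C` strictly
between them form a covering pair in `P`. -/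
def IsSaturatedChain {P : Type*} [PartialOrder P] (C : Finset P) : Prop :=
  IsChain (· ≤ ·) (C : Set P) ∧
    ∀ a ∈ C, ∀ b ∈ C, a < b → (∀ c ∈ C, ¬ (a < c ∧ c < b)) → a ⋖ b

/-!
Heights strictly increase along `<` and, in a ranked poset, by exactly one along covers, so on a
saturated chain they take every value between those of its ends. The ends of a symmetric chain
have heights `h` and `ht P - h` with `h ≤ ht P - h`, so the chain meets the middle level
`{x | ht x = ⌊ht P / 2⌋}`. Picking one middle element from each chain of the partition gives
`k` distinct elements of that level; conversely the level is an antichain, and an antichain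
meets each chain of a chain cover at most once, so no antichain has more than `k` elements and
no chain cover has fewer than `k` chains.
-/

section ChainExtrema

variable {α : Type*} [PartialOrder α] {s : Finset α}

theorem IsChain.exists_isGreatest_finset (hs : IsChain (· ≤ ·) (s : Set α)) (hne : s.Nonempty) :
    ∃ b, IsGreatest (s : Set α) b := by
  obtain ⟨b, hb⟩ := s.exists_maximal hne
  exact ⟨b, hb.prop, fun x hx => (hs.total hx hb.prop).elim id (hb.le_of_ge hx)⟩

theorem IsChain.exists_isLeast_finset (hs : IsChain (· ≤ ·) (s : Set α)) (hne : s.Nonempty) :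
    ∃ a, IsLeast (s : Set α) a := by
  obtain ⟨a, ha⟩ := s.exists_minimal hne
  exact ⟨a, ha.prop, fun x hx => (hs.total hx ha.prop).elim (ha.le_of_le hx) id⟩

end ChainExtrema

theorem IsAntichain.card_le_of_forall_mem_isChain {α ι : Type*} [PartialOrder α] [Fintype ι]
    {A : Finset α} (hA : IsAntichain (· ≤ ·) (A : Set α)) {D : ι → Finset α}
    (hD : ∀ i, IsChain (· ≤ ·) (D i : Set α)) (hcover : ∀ x, ∃ i, x ∈ D i) :
    A.card ≤ Fintype.card ι := by
  choose g hg using hcover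
  have hinj : Set.InjOn g A := fun x hx y hy hxy =>
    inter_subsingleton_of_isChain_of_isAntichain (hD (g x)) hA ⟨hg x, hx⟩ ⟨hxy ▸ hg y, hy⟩
  simpa using Finset.card_le_card_of_injOn g (fun x _ => Finset.mem_univ (g x)) hinj

def IsSymmetricChain {P : Type*} [PartialOrder P] (C : Finset P) : Prop :=
  IsSaturatedChain C ∧ ∀ a ∈ C, ∀ b ∈ C, (∀ y ∈ C, a ≤ y) → (∀ y ∈ C, y ≤ b) →
    heightOf a = heightPoset P - heightOf b

section Height

variable {P : Type*} [Fintype P] [PartialOrder P]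

theorem card_sub_one_le_heightOf {x : P} {C : Finset P} (hC : IsChain (· ≤ ·) (C : Set P))
    (hx : x ∈ C) (hle : ∀ y ∈ C, y ≤ x) : C.card - 1 ≤ heightOf x :=
  le_csSup ⟨Fintype.card P, by
      rintro _ ⟨D, -, -, -, rfl⟩; exact (Nat.sub_le _ _).trans D.card_le_univ⟩
    ⟨C, hC, hx, hle, rfl⟩

theorem exists_chain_card_sub_one_eq_heightOf (x : P) :
    ∃ C : Finset P, IsChain (· ≤ ·) (C : Set P) ∧ x ∈ C ∧ (∀ y ∈ C, y ≤ x) ∧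
      C.card - 1 = heightOf x :=
  Nat.sSup_mem (s := {n | ∃ C : Finset P, IsChain (· ≤ ·) (C : Set P) ∧ x ∈ C ∧
      (∀ y ∈ C, y ≤ x) ∧ C.card - 1 = n}) ⟨0, {x}, by simp⟩
    ⟨Fintype.card P, by
      rintro _ ⟨D, -, -, -, rfl⟩; exact (Nat.sub_le _ _).trans D.card_le_univ⟩

theorem heightOf_le_card (x : P) : heightOf x ≤ Fintype.card P := by
  obtain ⟨C, -, -, -, hC⟩ := exists_chain_card_sub_one_eq_heightOf x
  exact hC ▸ (Nat.sub_le _ _).trans C.card_le_univ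

theorem heightOf_le_heightPoset (x : P) : heightOf x ≤ heightPoset P :=
  le_csSup ⟨Fintype.card P, by rintro _ ⟨y, rfl⟩; exact heightOf_le_card y⟩ ⟨x, rfl⟩

theorem heightOf_strictMono : StrictMono (heightOf : P → ℕ) := by
  classical
  intro x y hxy
  obtain ⟨C, hC, hx, hle, hcard⟩ := exists_chain_card_sub_one_eq_heightOf x
  have hy : y ∉ C := fun hy => (hle y hy).not_gt hxy
  have hle_y : ∀ z ∈ insert y C, z ≤ y := by
    simpa using fun z hz => (hle z hz).trans hxy.le
  have hchain : IsChain (· ≤ ·) ((insert y C : Finset P) : Set P) := by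
    rw [Finset.coe_insert]
    exact hC.insert fun z hz _ => Or.inr (hle_y z (Finset.mem_insert_of_mem hz))
  have := card_sub_one_le_heightOf hchain (Finset.mem_insert_self y C) hle_y
  rw [Finset.card_insert_of_notMem hy] at this
  have := Finset.card_pos.mpr ⟨x, hx⟩
  omega

theorem isAntichain_setOf_heightOf_eq (n : ℕ) :
    IsAntichain (· ≤ ·) {x : P | heightOf x = n} := fun _ hx _ hy hxy hle =>
  (heightOf_strictMono (hle.lt_of_ne hxy)).ne (hx.trans hy.symm)

/-- In a ranked poset, the elements below `b` on a longest chain ending at a cover `a ⋖ b` all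
lie below `a`, so removing `b` gives a chain witnessing `ht a ≥ ht b - 1`. -/
theorem IsRanked.heightOf_eq_add_one_of_covBy (hranked : IsRanked P) {a b : P} (h : a ⋖ b) :
    heightOf b = heightOf a + 1 := by
  classical
  obtain ⟨D, hsub, hD, hbD, hDle, hDcard⟩ :=
    hranked b {a, b} (by simpa using IsChain.pair h.le) (by simp) (by simpa using h.le)
  have haD : a ∈ D := hsub (by simp)
  have hle_a : ∀ y ∈ D.erase b, y ≤ a := by
    intro y hy
    obtain ⟨hyb, hyD⟩ := Finset.mem_erase.mp hy
    rcases hD.total hyD haD with hya | hay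
    · exact hya
    · exact (hay.eq_of_not_lt fun hlt => h.2 hlt ((hDle y hyD).lt_of_ne hyb)).ge
  have := card_sub_one_le_heightOf (hD.mono (by simp)) (Finset.mem_erase.mpr ⟨h.ne, haD⟩) hle_a
  rw [Finset.card_erase_of_mem hbD] at this
  have := heightOf_strictMono h.lt
  omega

/-- The greatest element `c` of `C` of height at most `t` has height `t`: otherwise its
successor `d` in `C` covers it, and `ht d = ht c + 1 ≤ t` contradicts the maximality of `c`. -/
theorem IsSaturatedChain.exists_heightOf_eq (hranked : IsRanked P) {C : Finset P}
    (hC : IsSaturatedChain C) {a b : P} (ha : a ∈ C) (hb : b ∈ C) {t : ℕ}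
    (hat : heightOf a ≤ t) (htb : t ≤ heightOf b) : ∃ x ∈ C, heightOf x = t := by
  classical
  have hfilter (p : P → Prop) [DecidablePred p] :
      IsChain (· ≤ ·) ((C.filter p : Finset P) : Set P) :=
    hC.1.mono fun _ hx => (Finset.mem_filter.mp hx).1
  obtain ⟨c, hc, hc_max⟩ := (hfilter (heightOf · ≤ t)).exists_isGreatest_finset
    ⟨a, Finset.mem_filter.mpr ⟨ha, hat⟩⟩
  obtain ⟨hcC, hct⟩ := Finset.mem_filter.mp hc
  refine ⟨c, hcC, hct.eq_of_not_lt fun hlt => ?_⟩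
  have hcb : c < b := by
    refine ((hC.1.total hcC hb).resolve_right fun hbc => ?_).lt_of_ne ?_
    · exact (heightOf_strictMono.monotone hbc).not_gt (by omega)
    · rintro rfl; omega
  obtain ⟨d, hd, hd_min⟩ := (hfilter (c < ·)).exists_isLeast_finset
    ⟨b, Finset.mem_filter.mpr ⟨hb, hcb⟩⟩
  obtain ⟨hdC, hcd⟩ := Finset.mem_filter.mp hd
  have hcov : c ⋖ d := hC.2 c hcC d hdC hcd fun e heC ⟨hce, hed⟩ =>
    (hd_min (Finset.mem_filter.mpr ⟨heC, hce⟩)).not_gt hed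
  have hdt : heightOf d ≤ t := by
    rw [hranked.heightOf_eq_add_one_of_covBy hcov]; omega
  exact (hc_max (Finset.mem_filter.mpr ⟨hdC, hdt⟩)).not_gt hcd

theorem IsSymmetricChain.exists_heightOf_eq_half (hranked : IsRanked P) {C : Finset P}
    (hC : IsSymmetricChain C) (hne : C.Nonempty) : ∃ x ∈ C, heightOf x = heightPoset P / 2 := by
  obtain ⟨a, haC, ha⟩ := hC.1.1.exists_isLeast_finset hne
  obtain ⟨b, hbC, hb⟩ := hC.1.1.exists_isGreatest_finset hne
  have hsym := hC.2 a haC b hbC (fun _ hy => ha hy) (fun _ hy => hb hy)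
  have hab := heightOf_strictMono.monotone (ha hbC)
  have := heightOf_le_heightPoset b
  exact hC.1.exists_heightOf_eq hranked haC hbC (by omega) (by omega)

end Height

theorem symmetric_chain_decomposition_width_general {P : Type*} [Fintype P] [PartialOrder P]
    (hranked : IsRanked P)
    (k : ℕ) (C : Fin k → Finset P)
    (hpart : ∀ x : P, ∃! i, x ∈ C i)
    (hne : ∀ i, (C i).Nonempty)
    (hsat : ∀ i, IsSaturatedChain (C i))
    (hsym : ∀ i, ∀ a ∈ C i, ∀ b ∈ C i, (∀ y ∈ C i, a ≤ y) → (∀ y ∈ C i, y ≤ b) →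
      heightOf a = heightPoset P - heightOf b) :
    (IsGreatest {n | ∃ A : Finset P, IsAntichain (· ≤ ·) (A : Set P) ∧ A.card = n}
        (Finset.univ.filter fun x : P => heightOf x = heightPoset P / 2).card) ∧
      ∀ (m : ℕ) (D : Fin m → Finset P), (∀ i, IsChain (· ≤ ·) ((D i : Set P))) →
        (∀ x : P, ∃ i, x ∈ D i) → k ≤ m := by
  set L := Finset.univ.filter fun x : P => heightOf x = heightPoset P / 2
  have hL : IsAntichain (· ≤ ·) (L : Set P) := by
    simpa [L] using isAntichain_setOf_heightOf_eq (P := P) (heightPoset P / 2)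
  have hcover : ∀ x, ∃ i, x ∈ C i := fun x => (hpart x).exists
  have hLk : L.card = k := by
    refine le_antisymm ?_ ?_
    · simpa using hL.card_le_of_forall_mem_isChain (fun i => (hsat i).1) hcover
    · choose f hfC hf using fun i =>
        IsSymmetricChain.exists_heightOf_eq_half hranked ⟨hsat i, hsym i⟩ (hne i)
      have hinj : Function.Injective f := fun i j hij => (hpart (f i)).unique (hfC i) (hij ▸ hfC j)
      simpa using Finset.card_le_card_of_injOn (s := Finset.univ) (t := L) f
        (fun i _ => by simpa [L] using hf i) hinj.injOn
  refine ⟨⟨⟨L, hL, rfl⟩, ?_⟩, fun m D hD hDcover => ?_⟩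
  · rintro _ ⟨A, hA, rfl⟩
    simpa [hLk] using hA.card_le_of_forall_mem_isChain (fun i => (hsat i).1) hcover
  · simpa [hLk] using hL.card_le_of_forall_mem_isChain hD hDcover

/-- If a finite ranked poset admits a partition into symmetric chains, then its
width is the number of elements of height `⌊ht P / 2⌋`, and the partition is a
minimum chain partition. -/
theorem symmetric_chain_decomposition_width {P : Type*} [Fintype P] [PartialOrder P]
    [DecidableEq P] (hranked : IsRanked P)
    (k : ℕ) (C : Fin k → Finset P)
    (hpart : ∀ x : P, ∃! i, x ∈ C i)
    (hne : ∀ i, (C i).Nonempty)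
    (hsat : ∀ i, IsSaturatedChain (C i))
    (hsym : ∀ i, ∀ a ∈ C i, ∀ b ∈ C i, (∀ y ∈ C i, a ≤ y) → (∀ y ∈ C i, y ≤ b) →
      heightOf a = heightPoset P - heightOf b) :
    (IsGreatest {n | ∃ A : Finset P, IsAntichain (· ≤ ·) (A : Set P) ∧ A.card = n}
        (Finset.univ.filter fun x : P => heightOf x = heightPoset P / 2).card) ∧
      ∀ (m : ℕ) (D : Fin m → Finset P), (∀ i, IsChain (· ≤ ·) ((D i : Set P))) →
        (∀ x : P, ∃ i, x ∈ D i) → k ≤ m :=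
  symmetric_chain_decomposition_width_general hranked k C hpart hne hsat hsym
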